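/- Injectivity of the set-unfolding: let S = (Δ, L, E) be a saturated R-graph for an ALCM knowledge base (T, A, M) (in particular, without circularities, with syntactic functionality of M, and with the meta-difference witness condition). Then the function set : Δ → V defined by set(x) = x for x ∉ dom(M) and set(x) = {set(y) | A ∈ L(y)} for x =ₘ A ∈ M is injective. -/

import Mathlib

/-!
By well-founded induction on `≺`, assume `set` is injective on the predecessors of `x`.
Atoms are fixed by `set` and never collide with unfolded sets, so the only real case is
`x =ₘ A`, `y =ₘ B` with `set x = set y`. Then `set` maps the extensions of `A` and `B` onto
the same set, and since `set` is injective from the extension of `A` (the predecessors of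
`x`), the two extensions coincide, contradicting the meta-difference witness condition.
-/

theorem Set.eq_of_image_eq_of_injective_from {α β : Type*} {f : α → β} {s t : Set α}
    (himage : f '' s = f '' t) (hinj : ∀ z ∈ s, ∀ w ∈ t, f z = f w → z = w) : s = t := by
  ext z
  constructor
  · intro hz
    obtain ⟨w, hw, hfw⟩ : f z ∈ f '' t := himage ▸ Set.mem_image_of_mem f hz
    exact hinj z hz w hw hfw.symm ▸ hw
  · intro hz
    obtain ⟨w, hw, hfw⟩ : f z ∈ f '' s := himage ▸ Set.mem_image_of_mem f hz
    exact (hinj w hw z hz hfw) ▸ hw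

theorem set_unfolding_injective_general {AC : Type}
    (Δ : Set ZFSet)
    (m : ZFSet → Option AC) (L : ZFSet → Set AC)
    (hwf : WellFounded (fun y x : ZFSet =>
      y ∈ Δ ∧ ∃ A : AC, m x = some A ∧ A ∈ L y))
    (f : ZFSet → ZFSet)
    (hbasic : ∀ x ∈ Δ, m x = none → f x = x)
    (hmeta : ∀ x ∈ Δ, ∀ A : AC, m x = some A →
      ∀ z : ZFSet, z ∈ f x ↔ ∃ y ∈ Δ, A ∈ L y ∧ z = f y)
    -- basic elements are never sets produced by the construction
    (hsep : ∀ x ∈ Δ, ∀ y ∈ Δ, m x = none → (∃ A : AC, m y = some A) → f x ≠ f y)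
    -- consequence of the meta-difference witness condition together with saturation
    (hdiff : ∀ x ∈ Δ, ∀ y ∈ Δ, x ≠ y → ∀ A B : AC, m x = some A → m y = some B →
      {z | z ∈ Δ ∧ A ∈ L z} ≠ {z | z ∈ Δ ∧ B ∈ L z}) :
    Set.InjOn f Δ := by
  have image_extension : ∀ x ∈ Δ, ∀ A, m x = some A →
      f '' {z | z ∈ Δ ∧ A ∈ L z} = {z | z ∈ f x} := fun x hx A hA ↦ by
    ext z
    simp only [Set.mem_image, Set.mem_ofPred_eq, hmeta x hx A hA, and_assoc, eq_comm]
  intro x hx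
  induction x using hwf.induction with
  | _ x ih =>
  intro y hy hfxy
  by_contra hne
  cases hmx : m x with
  | none =>
    cases hmy : m y with
    | none => exact hne (by rw [← hbasic x hx hmx, hfxy, hbasic y hy hmy])
    | some B => exact hsep x hx y hy hmx ⟨B, hmy⟩ hfxy
  | some A =>
    cases hmy : m y with
    | none => exact hsep y hy x hx hmy ⟨A, hmx⟩ hfxy.symm
    | some B =>
      refine hdiff x hx y hy hne A B hmx hmy (Set.eq_of_image_eq_of_injective_from (f := f) ?_ ?_)
      · rw [image_extension x hx A hmx, image_extension y hy B hmy, hfxy]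
      · exact fun z ⟨hz, hzA⟩ w ⟨hw, _⟩ ↦ ih z ⟨hz, A, hmx, hzA⟩ hz hw

/-- Injectivity of the set-unfolding of a saturated R-graph for an ALCM knowledge
base.  Δ is the set of nodes (ZF-sets), `m` is the (syntactically functional)
MBox assigning to each individual with meta-modelling its atomic concept,
`L x` is the set of atomic concepts in the label of x, and the relation
`y ≺ x ↔ x =ₘ A ∈ M ∧ A ∈ L y` is well-founded (no circularities).
`f` is the function `set`: the identity on individuals without meta-modelling,
and f x = {f y | A ∈ L y} when m x = some A; values of `f` at individuals
without meta-modelling are not sets produced by the construction.  By the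
meta-difference witness condition, distinct individuals with meta-modelling
have distinct concept extensions.  Then `f` is injective on Δ. -/
theorem set_unfolding_injective {AC : Type}
    (Δ : Set ZFSet) (hfin : Δ.Finite)
    (m : ZFSet → Option AC) (L : ZFSet → Set AC)
    (hwf : WellFounded (fun y x : ZFSet =>
      y ∈ Δ ∧ ∃ A : AC, m x = some A ∧ A ∈ L y))
    (f : ZFSet → ZFSet)
    (hbasic : ∀ x ∈ Δ, m x = none → f x = x)
    (hmeta : ∀ x ∈ Δ, ∀ A : AC, m x = some A →
      ∀ z : ZFSet, z ∈ f x ↔ ∃ y ∈ Δ, A ∈ L y ∧ z = f y)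
    -- basic elements are never sets produced by the construction
    (hsep : ∀ x ∈ Δ, ∀ y ∈ Δ, m x = none → (∃ A : AC, m y = some A) → f x ≠ f y)
    -- consequence of the meta-difference witness condition together with saturation
    (hdiff : ∀ x ∈ Δ, ∀ y ∈ Δ, x ≠ y → ∀ A B : AC, m x = some A → m y = some B →
      {z | z ∈ Δ ∧ A ∈ L z} ≠ {z | z ∈ Δ ∧ B ∈ L z}) :
    Set.InjOn f Δ :=
  set_unfolding_injective_general Δ m L hwf f hbasic hmeta hsep hdiff
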